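/- Let ‖·‖ be a norm on ℝ^d such that w ↦ (1/2)‖w‖² is ν-strongly convex with respect to ‖·‖ (ν > 0), let W ⊆ ℝ^d be a nonempty closed convex set, let f : ℝ^d → ℝ be ρ-weakly convex with respect to ‖·‖ (ρ > 0), set β = 2ρ/ν, and let w ∈ W. If ŵ ∈ W minimizes v ↦ f(v) + (β/2)‖v − w‖² over W, then f(w) ≥ f(ŵ) + (β/2)‖ŵ − w‖² + (ρ/2)‖ŵ − w‖². -/

import Mathlib

open Set

/-- `Nm` is a norm on `ℝ^d`. -/
def IsNorm {d : ℕ} (Nm : EuclideanSpace ℝ (Fin d) → ℝ) : Prop :=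
  (∀ x, Nm x = 0 ↔ x = 0) ∧ (∀ (a : ℝ) (x), Nm (a • x) = |a| * Nm x) ∧
    ∀ x y, Nm (x + y) ≤ Nm x + Nm y

/-- `f` is `ρ`-weakly convex on `W` w.r.t. the norm `Nm`. -/
def WeaklyConvexOn {d : ℕ} (Nm : EuclideanSpace ℝ (Fin d) → ℝ) (ρ : ℝ)
    (W : Set (EuclideanSpace ℝ (Fin d))) (f : EuclideanSpace ℝ (Fin d) → ℝ) : Prop :=
  ∀ w ∈ W, ∀ v ∈ W, ∀ l : ℝ, 0 ≤ l → l ≤ 1 →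
    f (l • w + (1 - l) • v) ≤ l * f w + (1 - l) * f v + ρ * l * (1 - l) / 2 * Nm (w - v) ^ 2

/-- `f` is `lam`-strongly convex on `W` w.r.t. the norm `Nm`. -/
def StronglyConvexOnNorm {d : ℕ} (Nm : EuclideanSpace ℝ (Fin d) → ℝ) (lam : ℝ)
    (W : Set (EuclideanSpace ℝ (Fin d))) (f : EuclideanSpace ℝ (Fin d) → ℝ) : Prop :=
  ∀ w ∈ W, ∀ v ∈ W, ∀ t : ℝ, 0 ≤ t → t ≤ 1 →
    f (t • w + (1 - t) • v) ≤ t * f w + (1 - t) * f v - lam * t * (1 - t) / 2 * Nm (w - v) ^ 2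

/-!
Let `z = s ŵ + (1 - s) w` for `s ∈ [0, 1)`. Minimality of `ŵ` compares it with `z`; weak convexity
of `f` bounds `f z` with a loss of `ρ s (1 - s) / 2 · ‖ŵ - w‖²`, and strong convexity of `½‖·‖²`
bounds `½‖z - w‖²` with a gain of `ν s (1 - s) / 2 · ‖ŵ - w‖²`, weighted by `β`. Dividing by `1 - s`
and letting `s → 1` leaves a net gain of `(βν - ρ) / 2 · ‖ŵ - w‖²`, which is `ρ/2 · ‖ŵ - w‖²` for
`β = 2ρ/ν`.
-/

open Filter Topology

section

variable {d : ℕ} {Nm : EuclideanSpace ℝ (Fin d) → ℝ}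

theorem IsNorm.map_zero (hNm : IsNorm Nm) : Nm 0 = 0 := (hNm.1 0).2 rfl

theorem WeaklyConvexOn.mono {ρ : ℝ} {W V : Set (EuclideanSpace ℝ (Fin d))}
    {f : EuclideanSpace ℝ (Fin d) → ℝ} (hf : WeaklyConvexOn Nm ρ W f) (hVW : V ⊆ W) :
    WeaklyConvexOn Nm ρ V f :=
  fun w hw v hv l hl0 hl1 => hf w (hVW hw) v (hVW hv) l hl0 hl1

theorem StronglyConvexOnNorm.half_sq_smul_le {ν : ℝ} (hNm : IsNorm Nm)
    (hsc : StronglyConvexOnNorm Nm ν univ (fun w => 1 / 2 * Nm w ^ 2))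
    (u : EuclideanSpace ℝ (Fin d)) {s : ℝ} (hs0 : 0 ≤ s) (hs1 : s ≤ 1) :
    1 / 2 * Nm (s • u) ^ 2 ≤ s * (1 / 2 * Nm u ^ 2) - ν * s * (1 - s) / 2 * Nm u ^ 2 := by
  simpa [hNm.map_zero] using hsc u (mem_univ _) 0 (mem_univ _) s hs0 hs1

variable {ν ρ β : ℝ} {W : Set (EuclideanSpace ℝ (Fin d))} {f : EuclideanSpace ℝ (Fin d) → ℝ}
  {w what : EuclideanSpace ℝ (Fin d)}

theorem WeaklyConvexOn.prox_descent_of_mem_Ico (hNm : IsNorm Nm)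
    (hsc : StronglyConvexOnNorm Nm ν univ (fun w => 1 / 2 * Nm w ^ 2))
    (hf : WeaklyConvexOn Nm ρ W f) (hW : Convex ℝ W) (hw : w ∈ W) (hwhat : what ∈ W)
    (hβ : 0 ≤ β)
    (hmin : ∀ v ∈ W, f what + β / 2 * Nm (what - w) ^ 2 ≤ f v + β / 2 * Nm (v - w) ^ 2)
    {s : ℝ} (hs0 : 0 ≤ s) (hs1 : s < 1) :
    f what + β / 2 * Nm (what - w) ^ 2 + (β * ν - ρ) * s / 2 * Nm (what - w) ^ 2 ≤ f w := by
  set z := s • what + (1 - s) • w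
  have hz : z - w = s • (what - w) := by module
  have hmin_z := hmin z (hW hwhat hw hs0 (by linarith) (by ring))
  have hf_z := hf what hwhat w hw s hs0 hs1.le
  have hsq := hsc.half_sq_smul_le hNm (what - w) hs0 hs1.le
  rw [← hz] at hsq
  have hscaled : (1 - s) * (f what + β / 2 * Nm (what - w) ^ 2
      + (β * ν - ρ) * s / 2 * Nm (what - w) ^ 2) ≤ (1 - s) * f w := by
    nlinarith [mul_le_mul_of_nonneg_left hsq hβ]
  exact le_of_mul_le_mul_left hscaled (by linarith)

theorem WeaklyConvexOn.prox_descent (hNm : IsNorm Nm)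
    (hsc : StronglyConvexOnNorm Nm ν univ (fun w => 1 / 2 * Nm w ^ 2))
    (hf : WeaklyConvexOn Nm ρ W f) (hW : Convex ℝ W) (hw : w ∈ W) (hwhat : what ∈ W)
    (hβ : 0 ≤ β)
    (hmin : ∀ v ∈ W, f what + β / 2 * Nm (what - w) ^ 2 ≤ f v + β / 2 * Nm (v - w) ^ 2) :
    f what + β / 2 * Nm (what - w) ^ 2 + (β * ν - ρ) / 2 * Nm (what - w) ^ 2 ≤ f w := by
  have hlim : Tendsto (fun s => f what + β / 2 * Nm (what - w) ^ 2
      + (β * ν - ρ) * s / 2 * Nm (what - w) ^ 2) (𝓝[<] 1)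
      (𝓝 (f what + β / 2 * Nm (what - w) ^ 2 + (β * ν - ρ) * 1 / 2 * Nm (what - w) ^ 2)) :=
    tendsto_nhdsWithin_of_tendsto_nhds (Continuous.tendsto (by fun_prop) 1)
  have hev : ∀ᶠ s in 𝓝[<] (1 : ℝ), f what + β / 2 * Nm (what - w) ^ 2
      + (β * ν - ρ) * s / 2 * Nm (what - w) ^ 2 ≤ f w :=
    Filter.mem_of_superset (Ioo_mem_nhdsLT one_pos) fun s hs =>
      hf.prox_descent_of_mem_Ico hNm hsc hW hw hwhat hβ hmin hs.1.le hs.2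
  simpa using le_of_tendsto hlim hev

end

theorem stmt_16_general (d : ℕ) (Nm : EuclideanSpace ℝ (Fin d) → ℝ) (hNm : IsNorm Nm)
    (ν ρ : ℝ) (hν : 0 < ν) (hρ : 0 < ρ)
    (hsc : StronglyConvexOnNorm Nm ν univ (fun w => 1 / 2 * Nm w ^ 2))
    (W : Set (EuclideanSpace ℝ (Fin d)))
    (hWconv : Convex ℝ W)
    (f : EuclideanSpace ℝ (Fin d) → ℝ) (hf : WeaklyConvexOn Nm ρ univ f)
    (w : EuclideanSpace ℝ (Fin d)) (hw : w ∈ W)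
    (what : EuclideanSpace ℝ (Fin d)) (hwhat : what ∈ W)
    (hmin : ∀ v ∈ W, f what + (2 * ρ / ν) / 2 * Nm (what - w) ^ 2
      ≤ f v + (2 * ρ / ν) / 2 * Nm (v - w) ^ 2) :
    f w ≥ f what + (2 * ρ / ν) / 2 * Nm (what - w) ^ 2 + ρ / 2 * Nm (what - w) ^ 2 := by
  have hgain : 2 * ρ / ν * ν - ρ = ρ := by field_simp; ring
  have h := (hf.mono (subset_univ W)).prox_descent hNm hsc hWconv hw hwhat (by positivity) hmin
  rwa [hgain] at h

/-- If `(1/2)‖·‖²` is `ν`-strongly convex, `f` is `ρ`-weakly convex, `β = 2ρ/ν`, `w ∈ W`,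
and `ŵ` minimizes `v ↦ f(v) + (β/2)‖v − w‖²` over `W`, then
`f(w) ≥ f(ŵ) + (β/2)‖ŵ − w‖² + (ρ/2)‖ŵ − w‖²`. -/
theorem stmt_16 (d : ℕ) (Nm : EuclideanSpace ℝ (Fin d) → ℝ) (hNm : IsNorm Nm)
    (ν ρ : ℝ) (hν : 0 < ν) (hρ : 0 < ρ)
    (hsc : StronglyConvexOnNorm Nm ν univ (fun w => 1 / 2 * Nm w ^ 2))
    (W : Set (EuclideanSpace ℝ (Fin d))) (hWne : W.Nonempty) (hWclosed : IsClosed W)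
    (hWconv : Convex ℝ W)
    (f : EuclideanSpace ℝ (Fin d) → ℝ) (hf : WeaklyConvexOn Nm ρ univ f)
    (w : EuclideanSpace ℝ (Fin d)) (hw : w ∈ W)
    (what : EuclideanSpace ℝ (Fin d)) (hwhat : what ∈ W)
    (hmin : ∀ v ∈ W, f what + (2 * ρ / ν) / 2 * Nm (what - w) ^ 2
      ≤ f v + (2 * ρ / ν) / 2 * Nm (v - w) ^ 2) :
    f w ≥ f what + (2 * ρ / ν) / 2 * Nm (what - w) ^ 2 + ρ / 2 * Nm (what - w) ^ 2 :=
  stmt_16_general d Nm hNm ν ρ hν hρ hsc W hWconv f hf w hw what hwhat hmin
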